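/- Let M be a τ-rigid module over a finite-dimensional algebra A. Then for any module N, the maximum of ⟨−g_M, dim N₀⟩ over all submodules N₀ of N equals dim_k Hom_A(M, N). -/

import Mathlib

/-!
By the Auslander–Reiten formula, `⟨-g_M, dim N₀⟩ = dim Hom(M, N₀) - dim Hom(N₀, τM)`. The first
term is at most `dim Hom(M, N)` and the second is nonnegative. Both bounds are attained at the
trace of `M` in `N`, the sum of the images of all maps `M → N`: every map `M → N` factors through
it, and it is generated by images of `M`, so τ-rigidity of `M` forces `Hom(trace, τM) = 0`.
-/

open Module

instance Submodule.finiteDimensional_of_isScalarTower {k A N : Type*} [DivisionRing k]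
    [Ring A] [AddCommGroup N] [Module k N] [Module A N] [SMul k A] [IsScalarTower k A N]
    [FiniteDimensional k N] (S : Submodule A N) : FiniteDimensional k S :=
  FiniteDimensional.finiteDimensional_submodule (S.restrictScalars k)

namespace Module

variable (A M N : Type*) [Semiring A] [AddCommMonoid M] [Module A M] [AddCommMonoid N]
  [Module A N]

def traceSubmodule : Submodule A N :=
  ⨆ f : M →ₗ[A] N, LinearMap.range f

variable {A M N}

theorem apply_mem_traceSubmodule (f : M →ₗ[A] N) (m : M) : f m ∈ traceSubmodule A M N :=
  Submodule.mem_iSup_of_mem f ⟨m, rfl⟩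

theorem eq_zero_of_traceSubmodule {P : Type*} [AddCommMonoid P] [Module A P]
    (hM : ∀ f : M →ₗ[A] P, f = 0) (g : traceSubmodule A M N →ₗ[A] P) : g = 0 := by
  have hle : traceSubmodule A M N ≤ (LinearMap.ker g).map (traceSubmodule A M N).subtype := by
    refine iSup_le fun f => ?_
    rintro _ ⟨m, rfl⟩
    let f' := f.codRestrict _ (apply_mem_traceSubmodule f)
    exact ⟨f' m, LinearMap.congr_fun (hM (g ∘ₗ f')) m, rfl⟩
  refine LinearMap.ker_eq_top.mp (eq_top_iff.mpr fun x _ => ?_)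
  obtain ⟨y, hy, hyx⟩ := hle x.2
  rwa [Subtype.ext hyx] at hy

section Hom

variable (k : Type*) [Semiring k] [SMul k A] [Module k N] [IsScalarTower k A N]
  [SMulCommClass A k N]

theorem compRight_subtype_injective (S : Submodule A N) :
    Function.Injective (LinearMap.compRight k (M := M) S.subtype) :=
  fun _ _ h => (LinearMap.cancel_left S.injective_subtype).mp h

theorem finrank_hom_submodule_le [StrongRankCondition k] [Module.Finite k (M →ₗ[A] N)]
    (S : Submodule A N) :
    finrank k (M →ₗ[A] S) ≤ finrank k (M →ₗ[A] N) :=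
  LinearMap.finrank_le_finrank_of_injective (compRight_subtype_injective k S)

theorem finrank_hom_traceSubmodule :
    finrank k (M →ₗ[A] traceSubmodule A M N) = finrank k (M →ₗ[A] N) :=
  LinearEquiv.finrank_eq <| .ofBijective _
    ⟨compRight_subtype_injective k _,
      fun f => ⟨f.codRestrict _ (apply_mem_traceSubmodule f), LinearMap.ext fun _ => rfl⟩⟩

end Hom

end Module

theorem trop_dual_F_eval_neg_g_eq_hom_general (n : ℕ) (k A : Type) [Field k] [Ring A] [Algebra k A]
    (M : Type) [AddCommGroup M] [Module A M] [Module k M] [IsScalarTower k A M]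
    [FiniteDimensional k M]
    (τM : Type) [AddCommGroup τM] [Module A τM] [Module k τM] [IsScalarTower k A τM]
    (N : Type) [AddCommGroup N] [Module A N] [Module k N] [IsScalarTower k A N]
    [FiniteDimensional k N]
    (dimVec : (X : Type) → [AddCommGroup X] → [Module A X] → Fin n → ℕ)
    (gM : Fin n → ℤ)
    -- the Auslander–Reiten formula characterizing the g-vector of M
    (hAR : ∀ (X : Type) [AddCommGroup X] [Module A X] [Module k X] [IsScalarTower k A X]
        [FiniteDimensional k X] [SMulCommClass A k X],
      (∑ i, gM i * (dimVec X i : ℤ)) =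
        (Module.finrank k (X →ₗ[A] τM) : ℤ) - (Module.finrank k (M →ₗ[A] X) : ℤ))
    -- M is τ-rigid
    (hrigid : ∀ f : M →ₗ[A] τM, f = 0) :
    IsGreatest {x : ℤ | ∃ S : Submodule A N, x = ∑ i, (-gM i) * (dimVec S i : ℤ)}
      (Module.finrank k (M →ₗ[A] N) : ℤ) := by
  have hS : ∀ S : Submodule A N, ∑ i, (-gM i) * (dimVec S i : ℤ) =
      (finrank k (M →ₗ[A] S) : ℤ) - finrank k (S →ₗ[A] τM) := fun S => by
    simp only [neg_mul, Finset.sum_neg_distrib, hAR S, neg_sub]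
  refine ⟨⟨traceSubmodule A M N, ?_⟩, ?_⟩
  · have : Subsingleton (traceSubmodule A M N →ₗ[A] τM) :=
      ⟨fun f g => (eq_zero_of_traceSubmodule hrigid f).trans
        (eq_zero_of_traceSubmodule hrigid g).symm⟩
    rw [hS, finrank_hom_traceSubmodule, finrank_zero_of_subsingleton (R := k)
      (M := traceSubmodule A M N →ₗ[A] τM), Nat.cast_zero, sub_zero]
  · rintro _ ⟨S, rfl⟩
    have := finrank_hom_submodule_le k (M := M) S
    rw [hS]
    omega

/-- For a τ-rigid module `M` and any module `N`, the maximum of `⟨-g_M, dim N₀⟩` over all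
submodules `N₀` of `N` equals `dim_k Hom_A(M, N)`. -/
theorem trop_dual_F_eval_neg_g_eq_hom (n : ℕ) (k A : Type) [Field k] [Ring A] [Algebra k A]
    [FiniteDimensional k A]
    (M : Type) [AddCommGroup M] [Module A M] [Module k M] [IsScalarTower k A M]
    [FiniteDimensional k M] [SMulCommClass A k M]
    (τM : Type) [AddCommGroup τM] [Module A τM] [Module k τM] [IsScalarTower k A τM]
    [FiniteDimensional k τM] [SMulCommClass A k τM]
    (N : Type) [AddCommGroup N] [Module A N] [Module k N] [IsScalarTower k A N]
    [FiniteDimensional k N] [SMulCommClass A k N]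
    (dimVec : (X : Type) → [AddCommGroup X] → [Module A X] → Fin n → ℕ)
    (gM : Fin n → ℤ)
    -- the Auslander–Reiten formula characterizing the g-vector of M
    (hAR : ∀ (X : Type) [AddCommGroup X] [Module A X] [Module k X] [IsScalarTower k A X]
        [FiniteDimensional k X] [SMulCommClass A k X],
      (∑ i, gM i * (dimVec X i : ℤ)) =
        (Module.finrank k (X →ₗ[A] τM) : ℤ) - (Module.finrank k (M →ₗ[A] X) : ℤ))
    -- M is τ-rigid
    (hrigid : ∀ f : M →ₗ[A] τM, f = 0) :
    IsGreatest {x : ℤ | ∃ S : Submodule A N, x = ∑ i, (-gM i) * (dimVec S i : ℤ)}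
      (Module.finrank k (M →ₗ[A] N) : ℤ) :=
  trop_dual_F_eval_neg_g_eq_hom_general n k A M τM N dimVec gM hAR hrigid
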